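/- arXiv:2305.15979 — 3 statements merged into one kernel-verified Lean document; each statement's English description precedes it below -/
import Mathlib

section
/- Let N ≥ 1, let A be an N×N matrix of positive integers, let B be an N×N integer matrix with A_{ij} + B_{ij} ≥ 1 for all i,j, and let a,b ∈ {1,…,N}. Let E^{ab} be the N×N matrix with entry 1 at position (a,b) and 0 elsewhere. Then F(B, A + E^{ab}) = F(B, A) · ( (A_{ab} + B_{ab}) / A_{ab} ) · ( A_a / (A_a + B_a) ), where A_a = ∑_{j=1}^N A_{aj} and B_a = ∑_{j=1}^N B_{aj}. -/
open Finset

/-- The update factor `F(B, A)` from the paper. -/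
noncomputable def Ffactor {N : ℕ} (B : Fin N → Fin N → ℤ) (A : Fin N → Fin N → ℕ) : ℝ :=
  ((∏ i ∈ univ.filter (fun i => (∑ j, B i j) < 0),
      ∏ k ∈ range (∑ j, B i j).natAbs, ((∑ j, (A i j : ℝ)) - k - 1)) /
    (∏ i ∈ univ.filter (fun i => 0 < (∑ j, B i j)),
      ∏ k ∈ range (∑ j, B i j).toNat, ((∑ j, (A i j : ℝ)) + k))) *
  ∏ i, ((∏ j ∈ univ.filter (fun j => 0 < B i j),
          ∏ k ∈ range (B i j).toNat, ((A i j : ℝ) + k)) /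
        (∏ j ∈ univ.filter (fun j => B i j < 0),
          ∏ k ∈ range (B i j).natAbs, ((A i j : ℝ) - k - 1)))

/-!
For positive arguments each factor of `F` is a ratio of Gamma values:
`∏_{k<m} (x + k) = Γ(x + m) / Γ(x)` and `1 / ∏_{k<n} (x - k - 1) = Γ(x - n) / Γ(x)`, so
`F(B, A) = ∏_i (Γ(A_i) / Γ(A_i + B_i)) ∏_j Γ(A_ij + B_ij) / Γ(A_ij)`.
Adding `1` to `A_ab` changes only the entry factor at `(a, b)` and the row factor of row `a`,
and `Γ(y + 1) = y Γ(y)` turns each change into the stated ratio.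
-/

theorem Fintype.prod_eq_prod_mul_of_eq_of_ne {ι M : Type*} [Fintype ι] [DecidableEq ι]
    [CommMonoid M] {f g : ι → M} {c : M} (a : ι) (ha : f a = g a * c)
    (hne : ∀ i ≠ a, f i = g i) : ∏ i, f i = (∏ i, g i) * c := by
  rw [Fintype.prod_eq_mul_prod_compl a, Fintype.prod_eq_mul_prod_compl a g, ha,
    Finset.prod_congr rfl fun i hi => hne i (by simpa using hi), mul_right_comm]

namespace Real

theorem prod_range_add_eq_Gamma_div {x : ℝ} (hx : 0 < x) (n : ℕ) :
    ∏ k ∈ range n, (x + k) = Gamma (x + n) / Gamma x := by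
  induction n with
  | zero => simp [(Gamma_pos_of_pos hx).ne']
  | succ n ih =>
    rw [prod_range_succ, ih, Nat.cast_succ, ← add_assoc, Gamma_add_one (by positivity)]
    ring

theorem prod_range_sub_sub_one_eq_Gamma_div {x : ℝ} {n : ℕ} (h : 0 < x - n) :
    ∏ k ∈ range n, (x - k - 1) = Gamma x / Gamma (x - n) := by
  induction n with
  | zero =>
    simp only [CharP.cast_eq_zero, sub_zero] at h ⊢
    simp [(Gamma_pos_of_pos h).ne']
  | succ n ih =>
    push_cast at h ⊢
    have hGamma : Gamma (x - n) = (x - n - 1) * Gamma (x - (n + 1)) := by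
      rw [← sub_sub, ← Gamma_add_one (by linarith), sub_add_cancel]
    rw [prod_range_succ, ih (by linarith), hGamma]
    field_simp [(Gamma_pos_of_pos h).ne', (show x - n - 1 ≠ 0 by linarith)]

end Real

namespace Ffactor

open Real

noncomputable def entryFactor (x : ℝ) (m : ℤ) : ℝ :=
  (if 0 < m then ∏ k ∈ range m.toNat, (x + k) else 1) /
    (if m < 0 then ∏ k ∈ range m.natAbs, (x - k - 1) else 1)

theorem entryFactor_eq_Gamma_div {x : ℝ} {m : ℤ} (hx : 0 < x) (hxm : 0 < x + m) :
    entryFactor x m = Gamma (x + m) / Gamma x := by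
  rcases lt_trichotomy m 0 with hm | rfl | hm
  · obtain ⟨n, rfl⟩ := Int.exists_eq_neg_ofNat hm.le
    push_cast at hxm ⊢
    simp only [entryFactor, hm, lt_asymm hm, if_true, if_false, Int.natAbs_neg,
      Int.natAbs_natCast]
    rw [prod_range_sub_sub_one_eq_Gamma_div (by linarith), one_div_div, sub_eq_add_neg]
  · simp [entryFactor, (Gamma_pos_of_pos hx).ne']
  · obtain ⟨n, rfl⟩ := Int.eq_ofNat_of_zero_le hm.le
    simp only [entryFactor, hm, lt_asymm hm, if_true, if_false, Int.toNat_natCast, div_one,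
      Int.cast_natCast]
    exact prod_range_add_eq_Gamma_div hx n

theorem entryFactor_add_one {x : ℝ} {m : ℤ} (hx : 0 < x) (hxm : 0 < x + m) :
    entryFactor (x + 1) m = entryFactor x m * ((x + m) / x) := by
  rw [entryFactor_eq_Gamma_div (by linarith) (by linarith), entryFactor_eq_Gamma_div hx hxm,
    add_right_comm, Gamma_add_one hxm.ne', Gamma_add_one hx.ne']
  field_simp [(Gamma_pos_of_pos hx).ne']

section Row

variable {ι : Type*} [Fintype ι]

noncomputable def rowFactor (x : ι → ℝ) (m : ι → ℤ) : ℝ :=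
  (∏ j, entryFactor (x j) (m j)) / entryFactor (∑ j, x j) (∑ j, m j)

theorem rowFactor_add_single [DecidableEq ι] {x : ι → ℝ} {m : ι → ℤ} (hx : ∀ j, 0 < x j)
    (hxm : ∀ j, 0 < x j + m j) (b : ι) :
    rowFactor (fun j => x j + if j = b then 1 else 0) m
      = rowFactor x m * ((x b + m b) / x b) * ((∑ j, x j) / ((∑ j, x j) + ∑ j, (m j : ℝ))) := by
  have hsum_pos : 0 < ∑ j, x j := sum_pos (fun j _ => hx j) ⟨b, mem_univ b⟩
  have hsum_add_pos : 0 < (∑ j, x j) + ((∑ j, m j : ℤ) : ℝ) := by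
    rw [Int.cast_sum, ← sum_add_distrib]
    exact sum_pos (fun j _ => hxm j) ⟨b, mem_univ b⟩
  have hprod : ∏ j, entryFactor (x j + if j = b then 1 else 0) (m j)
      = (∏ j, entryFactor (x j) (m j)) * ((x b + m b) / x b) :=
    Fintype.prod_eq_prod_mul_of_eq_of_ne b (by simpa using entryFactor_add_one (hx b) (hxm b))
      fun j hj => by simp [hj]
  rw [rowFactor, rowFactor, hprod, sum_add_distrib, sum_ite_eq', if_pos (mem_univ b),
    entryFactor_add_one hsum_pos hsum_add_pos, Int.cast_sum]
  simp only [div_eq_mul_inv, mul_inv, inv_inv]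
  ring

end Row

theorem eq_prod_rowFactor {N : ℕ} (B : Fin N → Fin N → ℤ) (A : Fin N → Fin N → ℕ) :
    Ffactor B A = ∏ i, rowFactor (fun j => (A i j : ℝ)) (B i) := by
  simp only [Ffactor, rowFactor, entryFactor, prod_div_distrib, prod_filter]
  rw [div_div_eq_mul_div]
  ring

end Ffactor

theorem Ffactor_update_general {N : ℕ}
    (A : Fin N → Fin N → ℕ) (B : Fin N → Fin N → ℤ)
    (hA : ∀ i j, 1 ≤ A i j) (hAB : ∀ i j, 1 ≤ (A i j : ℤ) + B i j)
    (a b : Fin N) :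
    Ffactor B (fun i j => A i j + if i = a ∧ j = b then 1 else 0)
      = Ffactor B A
        * (((A a b : ℝ) + (B a b : ℝ)) / (A a b : ℝ))
        * ((∑ j, (A a j : ℝ)) / ((∑ j, (A a j : ℝ)) + ∑ j, (B a j : ℝ))) := by
  have hx : ∀ i j, (0 : ℝ) < A i j := fun i j => by exact_mod_cast hA i j
  have hxm : ∀ i j, (0 : ℝ) < A i j + B i j := fun i j => by
    have : (1 : ℝ) ≤ A i j + B i j := by exact_mod_cast hAB i j
    linarith
  rw [Ffactor.eq_prod_rowFactor, Ffactor.eq_prod_rowFactor, mul_assoc]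
  refine Fintype.prod_eq_prod_mul_of_eq_of_ne a ?_ fun i hi => by simp [hi]
  simpa [mul_assoc] using Ffactor.rowFactor_add_single (hx a) (hxm a) b

/-- one-step update rule
`F(B, A + E^{ab}) = F(B, A) · ((A_ab + B_ab)/A_ab) · (A_a/(A_a + B_a))`,
where `E^{ab}` is the matrix with a single `1` at position `(a,b)`. -/
theorem Ffactor_update {N : ℕ} (hN : 1 ≤ N)
    (A : Fin N → Fin N → ℕ) (B : Fin N → Fin N → ℤ)
    (hA : ∀ i j, 1 ≤ A i j) (hAB : ∀ i j, 1 ≤ (A i j : ℤ) + B i j)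
    (a b : Fin N) :
    Ffactor B (fun i j => A i j + if i = a ∧ j = b then 1 else 0)
      = Ffactor B A
        * (((A a b : ℝ) + (B a b : ℝ)) / (A a b : ℝ))
        * ((∑ j, (A a j : ℝ)) / ((∑ j, (A a j : ℝ)) + ∑ j, (B a j : ℝ))) :=
  Ffactor_update_general A B hA hAB a b
end

section
/- Fix Q = {1,…,N}, a parameter matrix θ ∈ ℕ^{N×N} with all entries ≥ 1, and an integer exponent matrix d ∈ ℤ^{N×N} with row sums d_i = ∑_j d_{ij}. Let w be a nonempty finite word over Q whose last letter is a, and let b ∈ Q. If c̄_{ij}(w) + d_{ij} ≥ 1 for all i,j ∈ Q (the consistency condition), then H(wb) = H(w) · ( (c̄_{ab}(w) + d_{ab}) / c̄_{ab}(w) ) · ( c̄_a(w) / (c̄_a(w) + d_a) ), where wb denotes the word w followed by the letter b; moreover the consistency condition also holds for wb. -/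
open Finset

/-- `countPairs w i j` = number of (consecutive) transitions from `i` to `j` in the word `w`. -/
def countPairs {N : ℕ} (w : List (Fin N)) (i j : Fin N) : ℕ :=
  (w.zip w.tail).count (i, j)

/-- `c̄_{ij}(w) = c_{ij}(w) + θ_{ij}`. -/
def cbar {N : ℕ} (θ : Fin N → Fin N → ℕ) (w : List (Fin N)) (i j : Fin N) : ℕ :=
  countPairs w i j + θ i j

/-- `c̄_i(w) = c_i(w) + ∑_j θ_{ij}`. -/
def cbarRow {N : ℕ} (θ : Fin N → Fin N → ℕ) (w : List (Fin N)) (i : Fin N) : ℕ :=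
  (∑ j, countPairs w i j) + ∑ j, θ i j

/-- `P(n, k) = n (n-1) ⋯ (n-k+1)`, the number of permutations of `k` items from `n`. -/
noncomputable def Pperm (n : ℤ) (k : ℕ) : ℝ :=
  ∏ t ∈ range k, ((n : ℝ) - t)

/-- Row sums `d_i = ∑_j d_{ij}` of the exponent matrix. -/
def drow {N : ℕ} (d : Fin N → Fin N → ℤ) (i : Fin N) : ℤ := ∑ j, d i j

/-- The quantity `H(w)` of the paper (Eq. (5)): the posterior expectation of the
monomial `∏ M_{ij}^{d_{ij}}` under the matrix-beta prior with parameter `θ`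
after observing the word `w`. -/
noncomputable def Hfun {N : ℕ} (θ : Fin N → Fin N → ℕ) (d : Fin N → Fin N → ℤ)
    (w : List (Fin N)) : ℝ :=
  ((∏ i, ∏ j ∈ univ.filter (fun j => 0 < d i j),
      Pperm ((cbar θ w i j : ℤ) - 1 + d i j) (d i j).toNat) /
    (∏ i ∈ univ.filter (fun i => 0 < drow d i),
      Pperm ((cbarRow θ w i : ℤ) - 1 + drow d i) (drow d i).toNat)) *
  ((∏ i ∈ univ.filter (fun i => drow d i < 0),
      Pperm ((cbarRow θ w i : ℤ) - 1) (drow d i).natAbs) /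
    (∏ i, ∏ j ∈ univ.filter (fun j => d i j < 0),
      Pperm ((cbar θ w i j : ℤ) - 1) (d i j).natAbs))

/-! Writing `Γ(x + e) / Γ(x)` as a falling factorial in `e`,
`H(w) = ∏_{i,j} (Γ(c̄_ij + d_ij) / Γ(c̄_ij)) / ∏_i (Γ(c̄_i + d_i) / Γ(c̄_i))`.
Appending `b` to a word ending in `a` raises only `c̄_ab` and `c̄_a`, each by one, and
`Γ(x + 1 + e) / Γ(x + 1) = Γ(x + e) / Γ(x) · (x + e) / x`. -/

lemma List.zip_tail_append_singleton {α : Type*} (b : α) :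
    ∀ (w : List α) (hw : w ≠ []),
      (w ++ [b]).zip (w ++ [b]).tail = w.zip w.tail ++ [(w.getLast hw, b)]
  | [x], _ => rfl
  | x :: y :: ys, _ => by
    have ih := List.zip_tail_append_singleton b (y :: ys) (List.cons_ne_nil y ys)
    simp only [List.cons_append, List.tail_cons, List.zip_cons_cons] at ih ⊢
    rw [ih]
    rfl

lemma cbarRow_eq_sum_cbar {N : ℕ} (θ : Fin N → Fin N → ℕ) (w : List (Fin N)) (i : Fin N) :
    cbarRow θ w i = ∑ j, cbar θ w i j := by
  simp [cbarRow, cbar, sum_add_distrib]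

section Append

variable {N : ℕ} (θ : Fin N → Fin N → ℕ) {w : List (Fin N)} (hw : w ≠ []) (b : Fin N)

lemma countPairs_append_singleton (i j : Fin N) :
    countPairs (w ++ [b]) i j = countPairs w i j + if i = w.getLast hw ∧ j = b then 1 else 0 := by
  rw [countPairs, countPairs, List.zip_tail_append_singleton b w hw, List.count_append,
    List.count_singleton]
  simp only [beq_iff_eq, Prod.mk.injEq, @eq_comm _ (w.getLast hw), @eq_comm _ b]

lemma cbar_append_singleton (i j : Fin N) :
    cbar θ (w ++ [b]) i j = cbar θ w i j + if i = w.getLast hw ∧ j = b then 1 else 0 := by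
  rw [cbar, cbar, countPairs_append_singleton hw]
  ring

lemma cbarRow_append_singleton (i : Fin N) :
    cbarRow θ (w ++ [b]) i = cbarRow θ w i + if i = w.getLast hw then 1 else 0 := by
  simp [cbarRow_eq_sum_cbar, cbar_append_singleton θ hw, sum_add_distrib, ite_and]

end Append

lemma Pperm_mul_sub (n : ℤ) (k : ℕ) : Pperm n k * (n - k) = n * Pperm (n - 1) k := by
  rw [Pperm, Pperm, ← prod_range_succ (fun t : ℕ => (n : ℝ) - t), prod_range_succ']
  push_cast
  simp only [sub_sub, add_comm (1 : ℝ), sub_zero, mul_comm]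

lemma Pperm_pos {n : ℤ} {k : ℕ} (h : k ≤ n) : 0 < Pperm n k :=
  prod_pos fun t ht => by
    have : (t : ℝ) < n := by exact_mod_cast (Nat.cast_lt.2 (mem_range.1 ht)).trans_le h
    linarith

/-- For `x ≥ 1` and `x + e ≥ 1` this is `Γ(x + e) / Γ(x)`. -/
noncomputable def gammaRatio (x e : ℤ) : ℝ :=
  (if 0 < e then Pperm (x - 1 + e) e.toNat else 1) / (if e < 0 then Pperm (x - 1) e.natAbs else 1)

lemma gammaRatio_add_one {x e : ℤ} (hx : 1 ≤ x) (hxe : 1 ≤ x + e) :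
    gammaRatio (x + 1) e = gammaRatio x e * ((x + e) / x) := by
  have hx0 : (x : ℝ) ≠ 0 := by exact_mod_cast (by omega : x ≠ 0)
  rcases lt_trichotomy e 0 with he | rfl | he
  · obtain ⟨k, rfl⟩ := Int.exists_eq_neg_ofNat he.le
    have hP := (Pperm_pos (n := x) (k := k) (by omega)).ne'
    have hP' := (Pperm_pos (n := x - 1) (k := k) (by omega)).ne'
    have hrec := Pperm_mul_sub x k
    simp only [gammaRatio, he, he.not_gt, if_true, if_false, add_sub_cancel_right,
      Int.natAbs_neg, Int.natAbs_natCast]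
    push_cast
    field_simp
    linear_combination -hrec
  · simp [gammaRatio, hx0]
  · lift e to ℕ using he.le
    have hrec := Pperm_mul_sub (x + e) e
    simp only [gammaRatio, he, he.not_gt, if_true, if_false, Int.toNat_natCast, div_one]
    rw [show x + 1 - 1 + e = x + e by ring, show x - 1 + e = x + e - 1 by ring]
    push_cast at hrec ⊢
    field_simp
    linear_combination hrec

lemma gammaRatio_add_ite (p : Prop) [Decidable p] {x e : ℤ} (hx : 1 ≤ x) (hxe : 1 ≤ x + e) :
    gammaRatio (x + if p then 1 else 0) e =
      gammaRatio x e * if p then ((x : ℝ) + e) / x else 1 := by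
  split_ifs
  · exact gammaRatio_add_one hx hxe
  · simp

lemma Hfun_eq_div_prod_gammaRatio {N : ℕ} (θ : Fin N → Fin N → ℕ) (d : Fin N → Fin N → ℤ)
    (w : List (Fin N)) :
    Hfun θ d w = (∏ i, ∏ j, gammaRatio (cbar θ w i j) (d i j)) /
      ∏ i, gammaRatio (cbarRow θ w i) (drow d i) := by
  simp only [Hfun, gammaRatio, prod_filter, prod_div_distrib, div_div_eq_mul_div]
  ring

section

variable {N : ℕ} {θ : Fin N → Fin N → ℕ} {d : Fin N → Fin N → ℤ} {w : List (Fin N)}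

lemma one_le_cbar (hθ : ∀ i j, 1 ≤ θ i j) (i j : Fin N) : 1 ≤ cbar θ w i j :=
  (hθ i j).trans (Nat.le_add_left _ _)

lemma one_le_cbarRow [Nonempty (Fin N)] (hθ : ∀ i j, 1 ≤ θ i j) (i : Fin N) :
    1 ≤ cbarRow θ w i := by
  obtain ⟨j⟩ := ‹Nonempty (Fin N)›
  rw [cbarRow_eq_sum_cbar]
  exact (one_le_cbar hθ i j).trans (single_le_sum (fun k _ => Nat.zero_le _) (mem_univ j))

lemma one_le_cbarRow_add_drow [Nonempty (Fin N)] (hcons : ∀ i j, 1 ≤ (cbar θ w i j : ℤ) + d i j)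
    (i : Fin N) : 1 ≤ (cbarRow θ w i : ℤ) + drow d i := by
  obtain ⟨j⟩ := ‹Nonempty (Fin N)›
  have hsum : (cbarRow θ w i : ℤ) + drow d i = ∑ j, ((cbar θ w i j : ℤ) + d i j) := by
    simp [cbarRow_eq_sum_cbar, drow, sum_add_distrib]
  rw [hsum]
  exact (hcons i j).trans <| single_le_sum (fun k _ => zero_le_one.trans (hcons i k)) (mem_univ j)

lemma prod_gammaRatio_cbar_append_singleton (hθ : ∀ i j, 1 ≤ θ i j)
    (hcons : ∀ i j, 1 ≤ (cbar θ w i j : ℤ) + d i j) (hw : w ≠ []) (b : Fin N) :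
    ∏ i, ∏ j, gammaRatio (cbar θ (w ++ [b]) i j) (d i j) =
      (∏ i, ∏ j, gammaRatio (cbar θ w i j) (d i j)) *
        (((cbar θ w (w.getLast hw) b : ℝ) + d (w.getLast hw) b) / cbar θ w (w.getLast hw) b) := by
  simp only [cbar_append_singleton θ hw, Nat.cast_add, Nat.cast_ite, Nat.cast_one, Nat.cast_zero,
    gammaRatio_add_ite _ (by exact_mod_cast one_le_cbar hθ _ _) (hcons _ _)]
  simp only [prod_mul_distrib, ite_and, ← ite_prod_one, prod_ite_eq', mem_univ, if_true,
    Int.cast_natCast]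

lemma prod_gammaRatio_cbarRow_append_singleton (hθ : ∀ i j, 1 ≤ θ i j)
    (hcons : ∀ i j, 1 ≤ (cbar θ w i j : ℤ) + d i j) (hw : w ≠ []) (b : Fin N) :
    ∏ i, gammaRatio (cbarRow θ (w ++ [b]) i) (drow d i) =
      (∏ i, gammaRatio (cbarRow θ w i) (drow d i)) *
        (((cbarRow θ w (w.getLast hw) : ℝ) + drow d (w.getLast hw)) /
          cbarRow θ w (w.getLast hw)) := by
  have : Nonempty (Fin N) := ⟨b⟩
  simp only [cbarRow_append_singleton θ hw, Nat.cast_add, Nat.cast_ite, Nat.cast_one,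
    Nat.cast_zero, gammaRatio_add_ite _ (by exact_mod_cast one_le_cbarRow hθ _)
      (one_le_cbarRow_add_drow hcons _)]
  simp only [prod_mul_distrib, prod_ite_eq', mem_univ, if_true, Int.cast_natCast]

end

/-- incremental computation of the posterior expectation.
If the consistency condition `c̄_{ij}(w) + d_{ij} ≥ 1` holds, then
`H(wb) = H(w) · ((c̄_{ab}(w)+d_{ab})/c̄_{ab}(w)) · (c̄_a(w)/(c̄_a(w)+d_a))`,
where `a` is the last letter of `w`; moreover consistency also holds for `wb`. -/
theorem Hfun_update {N : ℕ} (θ : Fin N → Fin N → ℕ) (hθ : ∀ i j, 1 ≤ θ i j)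
    (d : Fin N → Fin N → ℤ) (w : List (Fin N)) (hw : w ≠ []) (a b : Fin N)
    (ha : w.getLast hw = a)
    (hcons : ∀ i j, 1 ≤ (cbar θ w i j : ℤ) + d i j) :
    Hfun θ d (w ++ [b])
        = Hfun θ d w
          * (((cbar θ w a b : ℝ) + (d a b : ℝ)) / (cbar θ w a b : ℝ))
          * ((cbarRow θ w a : ℝ) / ((cbarRow θ w a : ℝ) + (drow d a : ℝ))) ∧
      (∀ i j, 1 ≤ (cbar θ (w ++ [b]) i j : ℤ) + d i j) := by
  subst ha
  refine ⟨?_, fun i j => ?_⟩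
  · rw [Hfun_eq_div_prod_gammaRatio, Hfun_eq_div_prod_gammaRatio,
      prod_gammaRatio_cbar_append_singleton hθ hcons hw,
      prod_gammaRatio_cbarRow_append_singleton hθ hcons hw, mul_div_mul_comm, div_div_eq_mul_div]
    ring
  · rw [cbar_append_singleton θ hw]
    have := hcons i j
    push_cast
    split_ifs <;> omega
end

section
/- Fix Q = {1,…,N} with N ≥ 2, a parameter matrix θ ∈ ℕ^{N×N} with all entries ≥ 1, a finite word w over Q with transition-count matrix C = (c_{ij}(w)), and a PSE in polynomial form φ = ∑_{k=1}^p κ_k ∏_{i,j∈Q} v_{ij}^{d^k_{ij}} with real weights κ_k and integer exponent matrices D^k. Suppose θ_{ij} + c_{ij}(w) + d^k_{ij} ≥ 1 for all i,j ∈ Q and all k ∈ {1,…,p}. Then the posterior expectation of φ(M) satisfies E_{θ,w}(φ(M)) = ∑_{k=1}^p κ_k · F(D^k, θ + C), where E_{θ,w}(g) := ( ∫_{(T_N)^N} g(M(y^1,…,y^N)) · ∏_{i,j=1}^N x_j(y^i)^{θ_{ij}+c_{ij}(w)−1} dy^1⋯dy^N ) / ( ∫_{(T_N)^N} ∏_{i,j=1}^N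 x_j(y^i)^{θ_{ij}+c_{ij}(w)−1} dy^1⋯dy^N ) and M(y^1,…,y^N) is the stochastic matrix whose i-th row is x(y^i). -/
/-!
Both integrals factor over the rows of `M`, so they are products of Dirichlet integrals
`∫_{T_N} ∏ⱼ xⱼ ^ aⱼ = ∏ⱼ aⱼ! / (∑ⱼ aⱼ + N - 1)!`. These follow by induction on `N` from the
Beta integral: fixing the first coordinate `t` and scaling the remaining ones by `1 - t` maps
`T_{N-1}` onto the slice of `T_N` above `t`. Off the null set where a coordinate vanishes,
multiplying the density by a monomial of `φ` only shifts its exponents, and the quotient of the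
resulting factorials is the product of rising and falling factorials that defines `F`.
-/

open Finset MeasureTheory

/-- The simplex-parameterization domain
`T_N = { y ∈ ℝ^{N-1} : y_i ≥ 0, ∑ y_i ≤ 1 }` (here `N = n+1`). -/
def Tset (n : ℕ) : Set (Fin n → ℝ) :=
  {y | (∀ i, 0 ≤ y i) ∧ ∑ i, y i ≤ 1}

/-- The probability vector `x(y)` in the `(N-1)`-simplex parameterized by `y ∈ T_N`. -/
noncomputable def simplexCoord {n : ℕ} (y : Fin n → ℝ) (i : Fin (n + 1)) : ℝ :=
  if h : (i : ℕ) < n then y ⟨i, h⟩ else 1 - ∑ j, y j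

open scoped Nat

theorem integral_pow_mul_one_sub_pow (a b : ℕ) :
    ∫ x in (0 : ℝ)..1, x ^ a * (1 - x) ^ b = (a ! * b ! : ℝ) / (a + b + 1)! := by
  have hβ := Complex.Gamma_mul_Gamma_eq_betaIntegral (s := a + 1) (t := b + 1)
    (by simp; positivity) (by simp; positivity)
  rw [show (a + 1 + (b + 1) : ℂ) = ((a + b + 1 : ℕ) : ℂ) + 1 by push_cast; ring,
    Complex.Gamma_nat_eq_factorial, Complex.Gamma_nat_eq_factorial,
    Complex.Gamma_nat_eq_factorial, Complex.betaIntegral] at hβ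
  have hreal : ∫ x in (0 : ℝ)..1, (x : ℂ) ^ ((a + 1 : ℂ) - 1) * (1 - (x : ℂ)) ^ ((b + 1 : ℂ) - 1)
      = ((∫ x in (0 : ℝ)..1, x ^ a * (1 - x) ^ b : ℝ) : ℂ) := by
    rw [← intervalIntegral.integral_ofReal]
    refine intervalIntegral.integral_congr fun x _ => ?_
    simp only [add_sub_cancel_right, Complex.cpow_natCast]
    push_cast
    ring
  rw [hreal] at hβ
  rw [eq_div_iff (by positivity)]
  exact_mod_cast (hβ.trans (mul_comm _ _)).symm

theorem integral_fin_cons {α E : Type*} [MeasureSpace α] [SigmaFinite (volume : Measure α)]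
    [NormedAddCommGroup E] [NormedSpace ℝ E] {n : ℕ} {F : (Fin (n + 1) → α) → E}
    (hF : Integrable F) :
    ∫ y, F y = ∫ t, ∫ z : Fin n → α, F (Fin.cons t z) := by
  have hmp := (volume_preserving_piFinSuccAbove (fun _ : Fin (n + 1) => α) 0).symm
  have hcons : ⇑(MeasurableEquiv.piFinSuccAbove (fun _ : Fin (n + 1) => α) 0).symm =
      fun q => Fin.cons q.1 q.2 := by
    ext q
    simp [MeasurableEquiv.piFinSuccAbove_symm_apply, Fin.insertNthEquiv, Fin.insertNth_zero']
  have hint := (hmp.integrable_comp_emb (MeasurableEquiv.measurableEmbedding _)).mpr hF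
  rw [hcons, Measure.volume_eq_prod] at hint
  rw [← hmp.integral_comp', hcons, Measure.volume_eq_prod]
  exact integral_prod _ hint

lemma continuous_simplexCoord {n : ℕ} (j : Fin (n + 1)) :
    Continuous fun y : Fin n → ℝ => simplexCoord y j := by
  unfold simplexCoord
  split_ifs
  · exact continuous_apply _
  · exact continuous_const.sub (continuous_finsetSum _ fun i _ => continuous_apply i)

@[simp] lemma simplexCoord_castSucc {n : ℕ} (y : Fin n → ℝ) (i : Fin n) :
    simplexCoord y i.castSucc = y i := by
  simp [simplexCoord]

@[simp] lemma simplexCoord_last {n : ℕ} (y : Fin n → ℝ) :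
    simplexCoord y (Fin.last n) = 1 - ∑ j, y j := by
  simp [simplexCoord]

lemma simplexCoord_cons_zero {n : ℕ} (t : ℝ) (z : Fin n → ℝ) :
    simplexCoord (Fin.cons t z : Fin (n + 1) → ℝ) 0 = t := by
  simp [simplexCoord]

lemma simplexCoord_cons_smul_succ {n : ℕ} (t : ℝ) (u : Fin n → ℝ) (k : Fin (n + 1)) :
    simplexCoord (Fin.cons t ((1 - t) • u) : Fin (n + 1) → ℝ) k.succ
      = (1 - t) * simplexCoord u k := by
  induction k using Fin.lastCases with
  | last =>
    simp only [Fin.succ_last, simplexCoord_last, Fin.sum_cons, Pi.smul_apply, smul_eq_mul,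
      ← mul_sum]
    ring
  | cast i =>
    rw [Fin.succ_castSucc, simplexCoord_castSucc, simplexCoord_castSucc, Fin.cons_succ,
      Pi.smul_apply, smul_eq_mul]

lemma isClosed_Tset (n : ℕ) : IsClosed (Tset n) := by
  simp only [Tset, Set.ofPred_and, Set.ofPred_forall]
  exact (isClosed_iInter fun i => isClosed_le continuous_const (continuous_apply i)).inter
    (isClosed_le (continuous_finsetSum _ fun i _ => continuous_apply i) continuous_const)

lemma isCompact_Tset (n : ℕ) : IsCompact (Tset n) :=
  (isCompact_Icc (a := 0) (b := 1)).of_isClosed_subset (isClosed_Tset n) fun _ hy =>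
    ⟨hy.1, fun i => (single_le_sum (fun k _ => hy.1 k) (mem_univ i)).trans hy.2⟩

lemma cons_mem_Tset_succ {n : ℕ} {t : ℝ} {z : Fin n → ℝ} :
    Fin.cons t z ∈ Tset (n + 1) ↔ 0 ≤ t ∧ (∀ k, 0 ≤ z k) ∧ t + ∑ k, z k ≤ 1 := by
  simp [Tset, Fin.forall_fin_succ, Fin.sum_cons, and_assoc]

lemma cons_smul_mem_Tset_succ {n : ℕ} {t : ℝ} (ht : t < 1) {u : Fin n → ℝ} :
    Fin.cons t ((1 - t) • u) ∈ Tset (n + 1) ↔ 0 ≤ t ∧ u ∈ Tset n := by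
  have h1t : 0 < 1 - t := sub_pos.2 ht
  rw [cons_mem_Tset_succ]
  simp only [Tset, Set.mem_ofPred_eq, Pi.smul_apply, smul_eq_mul, ← mul_sum,
    mul_nonneg_iff_of_pos_left h1t, ← le_sub_iff_add_le', mul_le_iff_le_one_right h1t]

lemma integral_cons_indicator_Tset_succ {n : ℕ} (a : Fin (n + 2) → ℕ) {t : ℝ} (ht : t ≠ 1) :
    ∫ z : Fin n → ℝ,
        (Tset (n + 1)).indicator (fun y => ∏ j, simplexCoord y j ^ a j) (Fin.cons t z)
      = (Set.Icc 0 1).indicator (fun t => t ^ a 0 * (1 - t) ^ (∑ k : Fin (n + 1), a k.succ + n)) t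
        * ∫ u in Tset n, ∏ k, simplexCoord u k ^ a k.succ := by
  by_cases ht01 : t ∈ Set.Icc 0 1
  · have ht1 : t < 1 := lt_of_le_of_ne ht01.2 ht
    have hscale : ∀ u : Fin n → ℝ,
        (Tset (n + 1)).indicator (fun y => ∏ j, simplexCoord y j ^ a j)
            (Fin.cons t ((1 - t) • u))
          = t ^ a 0 * (1 - t) ^ (∑ k : Fin (n + 1), a k.succ)
            * (Tset n).indicator (fun u => ∏ k, simplexCoord u k ^ a k.succ) u := by
      intro u
      by_cases hu : u ∈ Tset n
      · rw [Set.indicator_of_mem ((cons_smul_mem_Tset_succ ht1).2 ⟨ht01.1, hu⟩),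
          Set.indicator_of_mem hu, Fin.prod_univ_succ, simplexCoord_cons_zero]
        simp only [simplexCoord_cons_smul_succ, mul_pow, prod_mul_distrib, prod_pow_eq_pow_sum]
        ring
      · rw [Set.indicator_of_notMem (fun h => hu ((cons_smul_mem_Tset_succ ht1).1 h).2),
          Set.indicator_of_notMem hu, mul_zero]
    have h1t : (0 : ℝ) ≤ 1 - t := by linarith [ht01.2]
    calc ∫ z : Fin n → ℝ,
          (Tset (n + 1)).indicator (fun y => ∏ j, simplexCoord y j ^ a j) (Fin.cons t z)
        = (1 - t) ^ n * ∫ u : Fin n → ℝ, (Tset (n + 1)).indicator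
            (fun y => ∏ j, simplexCoord y j ^ a j) (Fin.cons t ((1 - t) • u)) := by
          have h := Measure.integral_comp_inv_smul_of_nonneg (volume : Measure (Fin n → ℝ))
            (fun u => (Tset (n + 1)).indicator (fun y => ∏ j, simplexCoord y j ^ a j)
              (Fin.cons t ((1 - t) • u))) h1t
          simpa only [smul_smul, mul_inv_cancel₀ (sub_ne_zero.2 ht.symm), one_smul,
            Module.finrank_fin_fun, smul_eq_mul] using h
      _ = _ := by
          rw [funext hscale, integral_const_mul,
            integral_indicator (isClosed_Tset n).measurableSet, Set.indicator_of_mem ht01]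
          ring
  · have hzero : ∀ z : Fin n → ℝ, Fin.cons t z ∉ Tset (n + 1) := by
      intro z hz
      obtain ⟨ht0, hz0, hsum⟩ := cons_mem_Tset_succ.1 hz
      exact ht01 ⟨ht0, by linarith [sum_nonneg fun k (_ : k ∈ univ) => hz0 k]⟩
    simp [Set.indicator_of_notMem (hzero _), Set.indicator_of_notMem ht01]

-- The multivariate Beta function `B(a + 1) = ∏ Γ(a j + 1) / Γ(∑ (a j + 1))`.
noncomputable def multiBeta (n : ℕ) (a : Fin (n + 1) → ℕ) : ℝ :=
  (∏ j, ((a j)! : ℝ)) / (∑ j, a j + n)!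

theorem integral_Tset_prod_simplexCoord_pow (n : ℕ) (a : Fin (n + 1) → ℕ) :
    ∫ y in Tset n, ∏ j, simplexCoord y j ^ a j = multiBeta n a := by
  induction n with
  | zero =>
    have hT : Tset 0 = Set.univ := by ext y; simp [Tset]
    simp [hT, multiBeta, simplexCoord, Measure.volume_pi_eq_dirac 0, Nat.factorial_ne_zero]
  | succ n ih =>
    have hint : Integrable ((Tset (n + 1)).indicator fun y => ∏ j, simplexCoord y j ^ a j) :=
      (integrable_indicator_iff (isClosed_Tset _).measurableSet).2 <|
        (continuous_finsetProd _ fun j _ => (continuous_simplexCoord j).pow _).continuousOn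
          |>.integrableOn_compact (isCompact_Tset _)
    rw [← integral_indicator (isClosed_Tset _).measurableSet, integral_fin_cons hint,
      integral_congr_ae ((Measure.ae_ne volume 1).mono fun t ht =>
        integral_cons_indicator_Tset_succ a ht),
      integral_mul_const, integral_indicator measurableSet_Icc, integral_Icc_eq_integral_Ioc,
      ← intervalIntegral.integral_of_le zero_le_one, integral_pow_mul_one_sub_pow,
      ih (fun k => a k.succ)]
    simp only [multiBeta, Fin.prod_univ_succ (n := n + 1), Fin.sum_univ_succ (n := n + 1)]
    rw [show a 0 + (∑ k : Fin (n + 1), a k.succ + n) + 1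
      = a 0 + ∑ k : Fin (n + 1), a k.succ + (n + 1) by ring]
    field_simp

theorem setIntegral_univ_pi_prod {ι α : Type*} [Fintype ι] [MeasureSpace α]
    [SigmaFinite (volume : Measure α)] (s : ι → Set α) (f : ι → α → ℝ) :
    ∫ y in Set.univ.pi s, ∏ i, f i (y i) = ∏ i, ∫ x in s i, f i x := by
  rw [volume_pi, Measure.restrict_pi_pi, integral_fintype_prod_eq_prod]

lemma setOf_forall_mem_eq_univ_pi {ι α : Type*} (s : Set α) :
    {y : ι → α | ∀ i, y i ∈ s} = Set.univ.pi fun _ => s := by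
  ext
  simp

theorem integral_rows_prod_simplexCoord_pow {ι : Type*} [Fintype ι] {n : ℕ}
    (e : ι → Fin (n + 1) → ℕ) :
    ∫ y in {y : ι → Fin n → ℝ | ∀ i, y i ∈ Tset n}, ∏ i, ∏ j, simplexCoord (y i) j ^ e i j
      = ∏ i, multiBeta n (e i) := by
  rw [setOf_forall_mem_eq_univ_pi, setIntegral_univ_pi_prod (fun _ => Tset n)
    (fun i y => ∏ j, simplexCoord y j ^ e i j)]
  simp only [integral_Tset_prod_simplexCoord_pow]

lemma volume_setOf_simplexCoord_eq_zero {n : ℕ} (j : Fin (n + 1)) :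
    volume {z : Fin n → ℝ | simplexCoord z j = 0} = 0 := by
  induction j using Fin.lastCases with
  | cast i =>
    simp only [simplexCoord_castSucc]
    rw [volume_pi]
    exact Measure.pi_hyperplane _ i 0
  | last =>
    simp only [simplexCoord_last, sub_eq_zero, eq_comm (a := (1 : ℝ))]
    let H : AffineSubspace ℝ (Fin n → ℝ) :=
      { carrier := {z | ∑ i, z i = 1}
        smul_vsub_vadd_mem' := fun c p q r hp hq hr => by
          simp_all [sum_add_distrib, ← mul_sum] }
    refine Measure.addHaar_affineSubspace volume H fun hH => ?_
    have h0 : (0 : Fin n → ℝ) ∈ H := hH ▸ AffineSubspace.mem_top ℝ _ 0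
    change ∑ i, (0 : Fin n → ℝ) i = 1 at h0
    simp at h0

lemma ae_simplexCoord_ne_zero {ι : Type*} [Fintype ι] {n : ℕ} :
    ∀ᵐ y : ι → Fin n → ℝ, ∀ i j, simplexCoord (y i) j ≠ 0 := by
  refine ae_all_iff.2 fun i => ae_all_iff.2 fun j => ?_
  rw [ae_iff, volume_pi]
  simp only [not_not]
  exact Measure.pi_eval_preimage_null (fun _ : ι => (volume : Measure (Fin n → ℝ))) (i := i)
    (volume_setOf_simplexCoord_eq_zero j)

-- `Γ(x + d) / Γ(x)` for an integer `d`: the rising factorial `x (x + 1) ⋯ (x + d - 1)`,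
-- continued to `d < 0` by `1 / ((x - 1) (x - 2) ⋯ (x + d))`.
noncomputable def risingFactorialZ (x : ℝ) (d : ℤ) : ℝ :=
  (∏ k ∈ range d.toNat, (x + k)) / ∏ k ∈ range (-d).toNat, (x - k - 1)

lemma risingFactorialZ_natCast_add_one (e : ℕ) {d : ℤ} (h : 0 ≤ (e : ℤ) + d) :
    risingFactorialZ (e + 1) d = ((e + d).toNat ! : ℝ) / e ! := by
  obtain ⟨m, rfl | rfl⟩ := Int.eq_nat_or_neg d
  · have hfac := Nat.factorial_mul_ascFactorial e m
    rw [Nat.ascFactorial_eq_prod_range] at hfac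
    rw [risingFactorialZ, show ((e : ℤ) + m).toNat = e + m by omega,
      show (-(m : ℤ)).toNat = 0 by omega, Int.toNat_natCast, range_zero, prod_empty, div_one,
      eq_div_iff (by positivity), ← hfac]
    push_cast
    ring
  · have hfac := Nat.factorial_mul_descFactorial (show m ≤ e by omega)
    rw [Nat.descFactorial_eq_prod_range] at hfac
    have hprod : ∏ k ∈ range m, ((e : ℝ) + 1 - k - 1) = ((∏ k ∈ range m, (e - k) : ℕ) : ℝ) := by
      push_cast
      refine prod_congr rfl fun k hk => ?_
      rw [Nat.cast_sub (by simp at hk; omega)]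
      ring
    rw [risingFactorialZ, show ((e : ℤ) + -m).toNat = e - m by omega,
      show (-(m : ℤ)).toNat = 0 by omega, neg_neg, Int.toNat_natCast, range_zero, prod_empty,
      hprod, div_eq_div_iff (Nat.cast_ne_zero.2 fun h0 => e.factorial_ne_zero (by
        rw [← hfac, h0, mul_zero])) (by positivity), ← hfac]
    push_cast
    ring

lemma ite_prod_range_toNat {M : Type*} [CommMonoid M] (d : ℤ) (f : ℕ → M) :
    (if 0 < d then ∏ k ∈ range d.toNat, f k else 1) = ∏ k ∈ range d.toNat, f k := by
  split_ifs with hd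
  · rfl
  · rw [Int.toNat_of_nonpos (not_lt.1 hd), range_zero, prod_empty]

lemma ite_prod_range_natAbs {M : Type*} [CommMonoid M] (d : ℤ) (f : ℕ → M) :
    (if d < 0 then ∏ k ∈ range d.natAbs, f k else 1) = ∏ k ∈ range (-d).toNat, f k := by
  split_ifs with hd
  · congr 2
    omega
  · rw [show (-d).toNat = 0 by omega, range_zero, prod_empty]

theorem Ffactor_eq_prod_risingFactorialZ {N : ℕ} (B : Fin N → Fin N → ℤ)
    (A : Fin N → Fin N → ℕ) :
    Ffactor B A = ∏ i, (∏ j, risingFactorialZ (A i j) (B i j))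
      / risingFactorialZ (∑ j, (A i j : ℝ)) (∑ j, B i j) := by
  simp only [Ffactor, prod_filter, ite_prod_range_toNat, ite_prod_range_natAbs,
    risingFactorialZ, prod_div_distrib]
  rw [div_div_eq_mul_div]
  ring

theorem Ffactor_add_one_eq_div {n : ℕ} (B : Fin (n + 1) → Fin (n + 1) → ℤ)
    (E : Fin (n + 1) → Fin (n + 1) → ℕ) (h : ∀ i j, 0 ≤ (E i j : ℤ) + B i j) :
    Ffactor B (fun i j => E i j + 1)
      = (∏ i, multiBeta n fun j => ((E i j : ℤ) + B i j).toNat) / ∏ i, multiBeta n (E i) := by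
  rw [Ffactor_eq_prod_risingFactorialZ, ← prod_div_distrib]
  refine prod_congr rfl fun i _ => ?_
  have hcast : ∀ j, (((E i j : ℤ) + B i j).toNat : ℤ) = E i j + B i j :=
    fun j => Int.toNat_of_nonneg (h i j)
  have hrow : ∑ j, ((E i j : ℝ) + 1) = ((∑ j, E i j + n : ℕ) : ℝ) + 1 := by
    rw [sum_add_distrib, sum_const, card_univ, Fintype.card_fin, nsmul_one]
    push_cast
    ring
  have hsum : ∑ j, ((E i j : ℤ) + B i j).toNat + n
      = (((∑ j, E i j + n : ℕ) : ℤ) + ∑ j, B i j).toNat := by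
    rw [← Int.toNat_natCast (∑ j, _ + n)]
    congr 1
    push_cast [hcast]
    rw [sum_add_distrib]
    ring
  have hsum_nonneg : 0 ≤ ((∑ j, E i j + n : ℕ) : ℤ) + ∑ j, B i j := by
    have := sum_nonneg fun j (_ : j ∈ univ) => h i j
    push_cast
    rw [sum_add_distrib] at this
    linarith
  simp only [Nat.cast_add_one]
  rw [hrow, risingFactorialZ_natCast_add_one _ hsum_nonneg, ← hsum]
  simp only [risingFactorialZ_natCast_add_one _ (h i _), multiBeta, prod_div_distrib]
  field_simp

lemma prod_zpow_mul_prod_pow {ι κ : Type*} [Fintype ι] [Fintype κ] {x : ι → κ → ℝ}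
    (hx : ∀ i j, x i j ≠ 0) {d : ι → κ → ℤ} {e : ι → κ → ℕ} (h : ∀ i j, 0 ≤ (e i j : ℤ) + d i j) :
    (∏ i, ∏ j, x i j ^ d i j) * ∏ i, ∏ j, x i j ^ e i j
      = ∏ i, ∏ j, x i j ^ ((e i j : ℤ) + d i j).toNat := by
  rw [← prod_mul_distrib]
  refine prod_congr rfl fun i _ => ?_
  rw [← prod_mul_distrib]
  refine prod_congr rfl fun j _ => ?_
  rw [← zpow_natCast, ← zpow_natCast, ← zpow_add₀ (hx i j), Int.toNat_of_nonneg (h i j),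
    add_comm]

theorem integral_rows_sum_mul_prod_simplexCoord_pow {ι P : Type*} [Fintype ι] [Fintype P]
    {n : ℕ} (κ : P → ℝ) (d : P → ι → Fin (n + 1) → ℤ) (e : ι → Fin (n + 1) → ℕ)
    (h : ∀ k i j, 0 ≤ (e i j : ℤ) + d k i j) :
    ∫ y in {y : ι → Fin n → ℝ | ∀ i, y i ∈ Tset n},
        (∑ k, κ k * ∏ i, ∏ j, simplexCoord (y i) j ^ d k i j)
          * ∏ i, ∏ j, simplexCoord (y i) j ^ e i j
      = ∑ k, κ k * ∏ i, multiBeta n fun j => ((e i j : ℤ) + d k i j).toNat := by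
  have hcompact : IsCompact {y : ι → Fin n → ℝ | ∀ i, y i ∈ Tset n} := by
    rw [setOf_forall_mem_eq_univ_pi]
    exact isCompact_univ_pi fun _ => isCompact_Tset n
  have hae : ∀ᵐ y : ι → Fin n → ℝ, (∑ k, κ k * ∏ i, ∏ j, simplexCoord (y i) j ^ d k i j)
        * ∏ i, ∏ j, simplexCoord (y i) j ^ e i j
      = ∑ k, κ k * ∏ i, ∏ j, simplexCoord (y i) j ^ ((e i j : ℤ) + d k i j).toNat :=
    ae_simplexCoord_ne_zero.mono fun y hy => by
      simp only [sum_mul, mul_assoc, prod_zpow_mul_prod_pow hy (h _)]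
  rw [integral_congr_ae (ae_restrict_of_ae hae), integral_finsetSum]
  · simp only [integral_const_mul, integral_rows_prod_simplexCoord_pow]
  · refine fun k _ => Integrable.const_mul ?_ (κ k)
    exact ContinuousOn.integrableOn_compact hcompact <| Continuous.continuousOn <|
      continuous_finsetProd _ fun i _ => continuous_finsetProd _ fun j _ =>
        ((continuous_simplexCoord j).comp (continuous_apply i)).pow _

theorem bayes_posterior_expectation_general {n : ℕ}
    (θ : Fin (n + 1) → Fin (n + 1) → ℕ) (hθ : ∀ i j, 1 ≤ θ i j)
    (w : List (Fin (n + 1)))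
    (p : ℕ) (κ : Fin p → ℝ) (d : Fin p → Fin (n + 1) → Fin (n + 1) → ℤ)
    (hcons : ∀ k i j, 1 ≤ (θ i j : ℤ) + (countPairs w i j : ℤ) + d k i j) :
    (∫ y in {y : Fin (n + 1) → Fin n → ℝ | ∀ i, y i ∈ Tset n},
        (∑ k, κ k * ∏ i, ∏ j, simplexCoord (y i) j ^ d k i j)
          * ∏ i, ∏ j,
              simplexCoord (y i) j ^ ((θ i j : ℤ) + (countPairs w i j : ℤ) - 1)
        ∂volume) /
      (∫ y in {y : Fin (n + 1) → Fin n → ℝ | ∀ i, y i ∈ Tset n},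
        ∏ i, ∏ j,
            simplexCoord (y i) j ^ ((θ i j : ℤ) + (countPairs w i j : ℤ) - 1)
        ∂volume)
      = ∑ k, κ k * Ffactor (d k) (fun i j => θ i j + countPairs w i j) := by
  obtain ⟨E, hE⟩ : ∃ E : Fin (n + 1) → Fin (n + 1) → ℕ,
      ∀ i j, θ i j + countPairs w i j = E i j + 1 :=
    ⟨fun i j => θ i j + countPairs w i j - 1, fun i j => by have := hθ i j; dsimp only; omega⟩
  have hexp : ∀ i j, (θ i j : ℤ) + countPairs w i j - 1 = E i j := fun i j => by
    have := hE i j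
    omega
  have hEd : ∀ k i j, 0 ≤ (E i j : ℤ) + d k i j := fun k i j => by
    have := hE i j
    have := hcons k i j
    omega
  simp only [hexp, zpow_natCast, hE]
  rw [integral_rows_sum_mul_prod_simplexCoord_pow κ d E hEd, integral_rows_prod_simplexCoord_pow,
    sum_div]
  simp only [mul_div_assoc, Ffactor_add_one_eq_div _ E (hEd _)]

/-- the posterior expectation of a PSE in polynomial form
`φ = ∑_k κ_k ∏_{i,j} v_{ij}^{d^k_{ij}}` under the matrix-beta posterior with
parameter `θ + C` (prior `θ` plus the transition counts `C` of the word `w`)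
equals `∑_k κ_k · F(D^k, θ + C)`.  Here `Q = {1,…,N}` with `N = n+1 ≥ 2`, the
posterior expectation is the ratio of integrals over `(T_N)^N`, and
`M(y)_{ij} = x_j(y^i)`. -/
theorem bayes_posterior_expectation {n : ℕ} (hn : 1 ≤ n)
    (θ : Fin (n + 1) → Fin (n + 1) → ℕ) (hθ : ∀ i j, 1 ≤ θ i j)
    (w : List (Fin (n + 1)))
    (p : ℕ) (κ : Fin p → ℝ) (d : Fin p → Fin (n + 1) → Fin (n + 1) → ℤ)
    (hcons : ∀ k i j, 1 ≤ (θ i j : ℤ) + (countPairs w i j : ℤ) + d k i j) :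
    (∫ y in {y : Fin (n + 1) → Fin n → ℝ | ∀ i, y i ∈ Tset n},
        (∑ k, κ k * ∏ i, ∏ j, simplexCoord (y i) j ^ d k i j)
          * ∏ i, ∏ j,
              simplexCoord (y i) j ^ ((θ i j : ℤ) + (countPairs w i j : ℤ) - 1)
        ∂volume) /
      (∫ y in {y : Fin (n + 1) → Fin n → ℝ | ∀ i, y i ∈ Tset n},
        ∏ i, ∏ j,
            simplexCoord (y i) j ^ ((θ i j : ℤ) + (countPairs w i j : ℤ) - 1)
        ∂volume)
      = ∑ k, κ k * Ffactor (d k) (fun i j => θ i j + countPairs w i j) :=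
  bayes_posterior_expectation_general θ hθ w p κ d hcons
end
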